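/- Let n ≥ 2 and let A(L_n) = {(x,y) ∈ L_n × L_n : y ≤ x} \ {(0,0)}. For (x,y) ∈ A(L_n) define the map (d_x)^y : L_n → L_n by (d_x)^y(z) = y if z = n−1 and (d_x)^y(z) = x ⊙ z otherwise. Then the assignment (x,y) ↦ (d_x)^y is injective on A(L_n), and the set of all (⊙,∨)-derivations on L_n is exactly {(d_x)^y : (x,y) ∈ A(L_n)}. -/
import Mathlib


/-- Łukasiewicz conjunction on the n-element MV-chain modeled on `Fin n`:
`a ⊙ b = (a + b) ∸ (n - 1)` (truncated subtraction). -/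
def codot {n : ℕ} (a b : Fin n) : Fin n :=
  ⟨a.1 + b.1 - (n - 1), by have ha := a.2; have hb := b.2; omega⟩

/-- `d` is an `(⊙,∨)`-derivation on the MV-chain `Fin n`:
`d (a ⊙ b) = (d a ⊙ b) ∨ (a ⊙ d b)` for all `a, b`. -/
def IsChainDer {n : ℕ} (d : Fin n → Fin n) : Prop :=
  ∀ a b : Fin n, d (codot a b) = max (codot (d a) b) (codot a (d b))

/-- The map (d_x)^y on Fin n: sends the top element n-1 to y and every
other z to x ⊙ z. -/
def dxy {n : ℕ} (hn : 2 ≤ n) (p : Fin n × Fin n) : Fin n → Fin n :=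
  fun z => if z = (⟨n - 1, by omega⟩ : Fin n) then p.2 else codot p.1 z

/-- the assignment (x,y) ↦ (d_x)^y is injective on
A(L_n) = {(x,y) : y ≤ x} \ {(0,0)}, and the (⊙,∨)-derivations on L_n are
exactly the maps (d_x)^y for (x,y) ∈ A(L_n). -/
theorem stmt17 (n : ℕ) (hn : 2 ≤ n) :
    (∀ p q : Fin n × Fin n,
        p.2 ≤ p.1 → ¬(p.1.1 = 0 ∧ p.2.1 = 0) →
        q.2 ≤ q.1 → ¬(q.1.1 = 0 ∧ q.2.1 = 0) →
        dxy hn p = dxy hn q → p = q) ∧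
      {d : Fin n → Fin n | IsChainDer d} =
        {d : Fin n → Fin n |
          ∃ p : Fin n × Fin n,
            p.2 ≤ p.1 ∧ ¬(p.1.1 = 0 ∧ p.2.1 = 0) ∧ d = dxy hn p} := by
  have hn1 : n - 1 < n := by omega
  have hn2 : n - 2 < n := by omega
  have h0n : 0 < n := by omega
  constructor
  · rintro ⟨x, y⟩ ⟨x', y'⟩ hle hne hle' hne' heq
    have hlev : y.1 ≤ x.1 := hle
    have hlev' : y'.1 ≤ x'.1 := hle'
    have hnev : ¬(x.1 = 0 ∧ y.1 = 0) := hne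
    have hnev' : ¬(x'.1 = 0 ∧ y'.1 = 0) := hne'
    have hTapp : ∀ p : Fin n × Fin n, dxy hn p ⟨n - 1, hn1⟩ = p.2 :=
      fun p => if_pos rfl
    have hne12 : (⟨n - 2, hn2⟩ : Fin n) ≠ ⟨n - 1, hn1⟩ := by
      intro hc
      have : n - 2 = n - 1 := congrArg Fin.val hc
      omega
    have hNapp : ∀ p : Fin n × Fin n,
        dxy hn p ⟨n - 2, hn2⟩ = codot p.1 ⟨n - 2, hn2⟩ :=
      fun p => if_neg hne12
    have h1 : y = y' := by
      have h := congrFun heq ⟨n - 1, hn1⟩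
      rwa [hTapp, hTapp] at h
    have h2 : codot x ⟨n - 2, hn2⟩ = codot x' ⟨n - 2, hn2⟩ := by
      have h := congrFun heq ⟨n - 2, hn2⟩
      rwa [hNapp, hNapp] at h
    have h2v : x.1 + (n - 2) - (n - 1) = x'.1 + (n - 2) - (n - 1) :=
      congrArg Fin.val h2
    have hxb := x.2
    have hxb' := x'.2
    have hxx : x = x' := Fin.ext (by omega)
    rw [Prod.mk.injEq]
    exact ⟨hxx, h1⟩
  · ext d
    simp only [Set.mem_setOf_eq]
    constructor
    · intro hd
      have hval : ∀ a b : Fin n,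
          (d (codot a b)).1 =
            max ((d a).1 + b.1 - (n - 1)) (a.1 + (d b).1 - (n - 1)) := by
        intro a b
        rw [hd a b]
        rfl
      -- d 0 = 0
      have h0 : (d (⟨0, h0n⟩ : Fin n)).1 = 0 := by
        have h00 : codot (⟨0, h0n⟩ : Fin n) ⟨0, h0n⟩ = ⟨0, h0n⟩ :=
          Fin.ext (show 0 + 0 - (n - 1) = 0 by omega)
        have h := hval ⟨0, h0n⟩ ⟨0, h0n⟩
        rw [h00] at h
        have h' : (d (⟨0, h0n⟩ : Fin n)).1 =
            max ((d (⟨0, h0n⟩ : Fin n)).1 + 0 - (n - 1))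
              (0 + (d (⟨0, h0n⟩ : Fin n)).1 - (n - 1)) := h
        clear h
        have hb := (d (⟨0, h0n⟩ : Fin n)).2
        omega
      have hebd := (d (⟨n - 2, hn2⟩ : Fin n)).2
      -- downward induction: d (n-2-j) = d (n-2) - j
      have key : ∀ j, j ≤ n - 2 → ∀ hj : n - 2 - j < n,
          (d ⟨n - 2 - j, hj⟩).1 = (d (⟨n - 2, hn2⟩ : Fin n)).1 - j := by
        intro j
        induction j with
        | zero =>
          intro _ hj
          have hz : (⟨n - 2 - 0, hj⟩ : Fin n) = ⟨n - 2, hn2⟩ :=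
            Fin.ext (show n - 2 - 0 = n - 2 by omega)
          rw [hz]
          omega
        | succ k ih =>
          intro hk hj
          have hj1 : n - 2 - k < n := by omega
          have hk' := ih (by omega) hj1
          have hco : codot (⟨n - 2, hn2⟩ : Fin n) ⟨n - 2 - k, hj1⟩ =
              ⟨n - 2 - (k + 1), hj⟩ :=
            Fin.ext (show (n - 2) + (n - 2 - k) - (n - 1) = n - 2 - (k + 1) by omega)
          have h := hval ⟨n - 2, hn2⟩ ⟨n - 2 - k, hj1⟩
          rw [hco] at h
          have h' : (d (⟨n - 2 - (k + 1), hj⟩ : Fin n)).1 =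
              max ((d (⟨n - 2, hn2⟩ : Fin n)).1 + (n - 2 - k) - (n - 1))
                ((n - 2) + (d (⟨n - 2 - k, hj1⟩ : Fin n)).1 - (n - 1)) := h
          clear h hco
          have hdb := (d (⟨n - 2 - k, hj1⟩ : Fin n)).2
          omega
      -- d (n-2) ≤ n - 2
      have hj2 : n - 2 - (n - 2) < n := by omega
      have hz0 : (⟨n - 2 - (n - 2), hj2⟩ : Fin n) = ⟨0, h0n⟩ :=
        Fin.ext (show n - 2 - (n - 2) = 0 by omega)
      have he2 : (d (⟨n - 2, hn2⟩ : Fin n)).1 ≤ n - 2 := by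
        have hk := key (n - 2) le_rfl hj2
        rw [hz0, h0] at hk
        omega
      -- d (n-1) ≤ d (n-2) + 1
      have hyle : (d (⟨n - 1, hn1⟩ : Fin n)).1 ≤ (d (⟨n - 2, hn2⟩ : Fin n)).1 + 1 := by
        have hco : codot (⟨n - 1, hn1⟩ : Fin n) ⟨n - 2, hn2⟩ = ⟨n - 2, hn2⟩ :=
          Fin.ext (show (n - 1) + (n - 2) - (n - 1) = n - 2 by omega)
        have h := hval ⟨n - 1, hn1⟩ ⟨n - 2, hn2⟩
        rw [hco] at h
        have h' : (d (⟨n - 2, hn2⟩ : Fin n)).1 =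
            max ((d (⟨n - 1, hn1⟩ : Fin n)).1 + (n - 2) - (n - 1))
              ((n - 1) + (d (⟨n - 2, hn2⟩ : Fin n)).1 - (n - 1)) := h
        clear h hco
        have hb := (d (⟨n - 1, hn1⟩ : Fin n)).2
        omega
      refine ⟨(⟨(d (⟨n - 2, hn2⟩ : Fin n)).1 + 1, by omega⟩, d ⟨n - 1, hn1⟩),
        hyle, fun hc => Nat.succ_ne_zero _ hc.1, ?_⟩
      funext z
      by_cases hz : z = (⟨n - 1, hn1⟩ : Fin n)
      · rw [hz]
        have hT : dxy hn (⟨(d (⟨n - 2, hn2⟩ : Fin n)).1 + 1, by omega⟩, d ⟨n - 1, hn1⟩)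
            ⟨n - 1, hn1⟩ = d ⟨n - 1, hn1⟩ := if_pos rfl
        rw [hT]
      · have hNe : dxy hn (⟨(d (⟨n - 2, hn2⟩ : Fin n)).1 + 1, by omega⟩, d ⟨n - 1, hn1⟩) z
            = codot ⟨(d (⟨n - 2, hn2⟩ : Fin n)).1 + 1, by omega⟩ z := if_neg hz
        rw [hNe]
        have hzv : z.1 ≤ n - 2 := by
          have hzb := z.2
          have : z.1 ≠ n - 1 := fun h => hz (Fin.ext h)
          omega
        have hj3 : n - 2 - (n - 2 - z.1) < n := by omega
        have hzeq : z = ⟨n - 2 - (n - 2 - z.1), hj3⟩ :=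
          Fin.ext (show z.1 = n - 2 - (n - 2 - z.1) by omega)
        have hk := key (n - 2 - z.1) (by omega) hj3
        rw [← hzeq] at hk
        refine Fin.ext ?_
        show (d z).1 = ((d (⟨n - 2, hn2⟩ : Fin n)).1 + 1) + z.1 - (n - 1)
        rw [hk]
        omega
    · rintro ⟨⟨x, y⟩, hle, hne, rfl⟩
      have hlev : y.1 ≤ x.1 := hle
      have hxb := x.2
      have hyb := y.2
      have dxyT : dxy hn (x, y) ⟨n - 1, hn1⟩ = y := if_pos rfl
      have dxyNe : ∀ z : Fin n, z ≠ (⟨n - 1, hn1⟩ : Fin n) →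
          dxy hn (x, y) z = codot x z := fun z hz => if_neg hz
      intro a b
      have hab := a.2
      have hbb := b.2
      by_cases ha : a = (⟨n - 1, hn1⟩ : Fin n)
      · subst ha
        by_cases hb : b = (⟨n - 1, hn1⟩ : Fin n)
        · subst hb
          have hco : codot (⟨n - 1, hn1⟩ : Fin n) ⟨n - 1, hn1⟩ = ⟨n - 1, hn1⟩ :=
            Fin.ext (show (n - 1) + (n - 1) - (n - 1) = n - 1 by omega)
          rw [hco, dxyT]
          refine Fin.ext ?_
          show y.1 = max (y.1 + (n - 1) - (n - 1)) ((n - 1) + y.1 - (n - 1))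
          omega
        · have hco : codot (⟨n - 1, hn1⟩ : Fin n) b = b :=
            Fin.ext (show (n - 1) + b.1 - (n - 1) = b.1 by omega)
          rw [hco, dxyT, dxyNe b hb]
          refine Fin.ext ?_
          show x.1 + b.1 - (n - 1) =
            max (y.1 + b.1 - (n - 1)) ((n - 1) + (x.1 + b.1 - (n - 1)) - (n - 1))
          omega
      · by_cases hb : b = (⟨n - 1, hn1⟩ : Fin n)
        · subst hb
          have hco : codot a (⟨n - 1, hn1⟩ : Fin n) = a :=
            Fin.ext (show a.1 + (n - 1) - (n - 1) = a.1 by omega)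
          rw [hco, dxyT, dxyNe a ha]
          refine Fin.ext ?_
          show x.1 + a.1 - (n - 1) =
            max ((x.1 + a.1 - (n - 1)) + (n - 1) - (n - 1)) (a.1 + y.1 - (n - 1))
          omega
        · have ha' : a.1 ≠ n - 1 := fun h => ha (Fin.ext h)
          have hb' : b.1 ≠ n - 1 := fun h => hb (Fin.ext h)
          have hcoNe : codot a b ≠ (⟨n - 1, hn1⟩ : Fin n) := by
            intro h
            have hv : a.1 + b.1 - (n - 1) = n - 1 := congrArg Fin.val h
            omega
          rw [dxyNe _ hcoNe, dxyNe a ha, dxyNe b hb]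
          refine Fin.ext ?_
          show x.1 + (a.1 + b.1 - (n - 1)) - (n - 1) =
            max ((x.1 + a.1 - (n - 1)) + b.1 - (n - 1))
              (a.1 + (x.1 + b.1 - (n - 1)) - (n - 1))
          omega
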